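/- Every planar orthogonal drawing of the complete graph K4 on four vertices has at least four bends in total and contains an edge with at least two bends. -/

import Mathlib

open SimpleGraph

/-- Points of the plane. -/
abbrev Pt : Type := ℝ × ℝ

/-- The segments of a polyline given by its list of corner points. -/
def segsOf (l : List Pt) : List (Pt × Pt) := l.zip l.tail

/-- The set of points covered by a polyline. -/
def chainTrace (l : List Pt) : Set Pt := ⋃ s ∈ segsOf l, segment ℝ s.1 s.2

/-- A nondegenerate axis-parallel (horizontal or vertical) segment. -/
def AxisSeg (p q : Pt) : Prop := p ≠ q ∧ (p.1 = q.1 ∨ p.2 = q.2)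

/-- Consecutive triples of a list. -/
def triplesOf (l : List Pt) : List (Pt × Pt × Pt) := l.zip (l.tail.zip l.tail.tail)

/-- Two consecutive axis-parallel segments meeting perpendicularly (a genuine corner). -/
def PerpCorner (p q r : Pt) : Prop := (p.1 = q.1 ∧ q.2 = r.2) ∨ (p.2 = q.2 ∧ q.1 = r.1)

/-- Every interior point of the polyline is a genuine (90 degree) corner. -/
def Alternating (l : List Pt) : Prop := ∀ t ∈ triplesOf l, PerpCorner t.1 t.2.1 t.2.2

/-- The cross product of the two direction vectors at an interior corner. -/
def crossVal (p q r : Pt) : ℝ := (q.1 - p.1) * (r.2 - q.2) - (q.2 - p.2) * (r.1 - q.1)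

open Classical in
/-- `1` for a left (counterclockwise) turn, `-1` for a right (clockwise) turn, `0` if straight. -/
noncomputable def turnVal (p q r : Pt) : ℤ :=
  if 0 < crossVal p q r then 1 else if crossVal p q r < 0 then -1 else 0

/-- The list of turn values at the interior points of a polyline. -/
noncomputable def turnVals (l : List Pt) : List ℤ :=
  (triplesOf l).map fun t => turnVal t.1 t.2.1 t.2.2

/-- The turn number of a polyline: the absolute value of the difference between
the number of right turns and the number of left turns along it. -/
noncomputable def turnNumber (l : List Pt) : ℕ := (turnVals l).sum.natAbs

/-- A simple polyline: non-adjacent segments are disjoint, adjacent segments share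
exactly their common endpoint. -/
def SimpleChain (l : List Pt) : Prop :=
  ∀ i j : Fin (segsOf l).length, (i : ℕ) < (j : ℕ) →
    segment ℝ ((segsOf l).get i).1 ((segsOf l).get i).2 ∩
      segment ℝ ((segsOf l).get j).1 ((segsOf l).get j).2 ⊆
      (if (j : ℕ) = (i : ℕ) + 1 then {((segsOf l).get j).1} else (∅ : Set Pt))

/-- The union of the unbounded connected components of the complement of `S`
(the outer face of a drawing whose trace is `S`). -/
def outerPart (S : Set Pt) : Set Pt :=
  {p | p ∉ S ∧ ¬ Bornology.IsBounded (connectedComponentIn Sᶜ p)}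

variable {V : Type}

/-- The degree of a vertex. -/
noncomputable def degOf (G : SimpleGraph V) (v : V) : ℕ := (G.neighborSet v).ncard

/-- A biconnected graph: at least three vertices and no cut vertex. -/
def Biconnected (G : SimpleGraph V) : Prop :=
  G.Connected ∧ 3 ≤ Nat.card V ∧
    ∀ v : V, (((⊤ : G.Subgraph).deleteVerts {v}).coe).Connected

/-- A planar polygonal drawing of a simple graph `G`: vertices are mapped to distinct
points, each edge to a simple polygonal curve joining the points of its endpoints
(described by the list of its interior corners, i.e. bends), and curves of distinct
edges meet only at points of shared endpoints. -/
structure PolyDrawing (G : SimpleGraph V) where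
  pos : V → Pt
  pos_inj : Function.Injective pos
  bends : V → V → List Pt
  bends_symm : ∀ u v : V, bends v u = (bends u v).reverse
  edge_nondeg : ∀ u v : V, G.Adj u v →
    (pos u :: (bends u v ++ [pos v])).Chain' (· ≠ ·)
  edge_simple : ∀ u v : V, G.Adj u v →
    SimpleChain (pos u :: (bends u v ++ [pos v]))
  edges_disjoint : ∀ u v x y : V, G.Adj u v → G.Adj x y → s(u, v) ≠ s(x, y) →
    chainTrace (pos u :: (bends u v ++ [pos v])) ∩
      chainTrace (pos x :: (bends x y ++ [pos y])) ⊆ pos '' (({u, v} : Set V) ∩ {x, y})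
  vertex_off_edges : ∀ w u v : V, G.Adj u v → w ≠ u → w ≠ v →
    pos w ∉ chainTrace (pos u :: (bends u v ++ [pos v]))

/-- A (finite simple) graph is planar iff it admits a planar polygonal drawing. -/
def GraphIsPlanar (G : SimpleGraph V) : Prop := Nonempty (PolyDrawing G)

/-- A planar orthogonal drawing: a planar polygonal drawing in which every segment of
every edge is horizontal or vertical and every interior corner of an edge is a genuine
bend (a 90 degree turn). -/
structure OrthoDrawing (G : SimpleGraph V) extends PolyDrawing G where
  edge_axis : ∀ u v : V, G.Adj u v → (pos u :: (bends u v ++ [pos v])).Chain' AxisSeg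
  edge_alt : ∀ u v : V, G.Adj u v → Alternating (pos u :: (bends u v ++ [pos v]))

namespace PolyDrawing

variable {G : SimpleGraph V}

/-- The polyline of the edge `(u,v)`, traversed from `u` to `v`. -/
def edgePts (Γ : PolyDrawing G) (u v : V) : List Pt := Γ.pos u :: (Γ.bends u v ++ [Γ.pos v])

/-- The set of points of the curve of edge `(u,v)`. -/
def edgeTrace (Γ : PolyDrawing G) (u v : V) : Set Pt := chainTrace (Γ.edgePts u v)

/-- The curve of edge `(u,v)` without its endpoints. -/
def openTrace (Γ : PolyDrawing G) (u v : V) : Set Pt :=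
  Γ.edgeTrace u v \ {Γ.pos u, Γ.pos v}

/-- The set of points of the whole drawing. -/
def drawTrace (Γ : PolyDrawing G) : Set Pt :=
  ⋃ (p : V × V) (_ : G.Adj p.1 p.2), Γ.edgeTrace p.1 p.2

/-- The number of bends of an edge. -/
noncomputable def bendCount (Γ : PolyDrawing G) : Sym2 V → ℕ :=
  Sym2.lift ⟨fun u v => (Γ.bends u v).length, fun u v => by
    simp only [Γ.bends_symm u v, List.length_reverse]⟩

/-- The total number of bends of a drawing. -/
noncomputable def totalBends [Fintype V] (Γ : PolyDrawing G) : ℕ :=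
  ∑ e ∈ (Set.toFinite G.edgeSet).toFinset, Γ.bendCount e

/-- A point lies on the outer face of the drawing. -/
def OnOuterFacePt (Γ : PolyDrawing G) (p : Pt) : Prop :=
  p ∈ frontier (outerPart Γ.drawTrace)

/-- The edge `(u,v)` lies on the outer face of the drawing. -/
def EdgeOnOuterFace (Γ : PolyDrawing G) (u v : V) : Prop :=
  Γ.edgeTrace u v ⊆ frontier (outerPart Γ.drawTrace)

/-- The polyline of a drawn walk. -/
def walkPts (Γ : PolyDrawing G) {u v : V} (w : G.Walk u v) : List Pt :=
  Γ.pos u :: (w.darts.flatMap fun d => Γ.bends d.toProd.1 d.toProd.2 ++ [Γ.pos d.toProd.2])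

/-- The turn number `t(p)` of a drawn walk. -/
noncomputable def walkTurnNumber (Γ : PolyDrawing G) {u v : V} (w : G.Walk u v) : ℕ :=
  turnNumber (Γ.walkPts w)

/-- The set of points of the drawing of a cycle. -/
def cycleTrace (Γ : PolyDrawing G) {x : V} (c : G.Walk x x) : Set Pt :=
  ⋃ d ∈ c.darts, Γ.edgeTrace d.toProd.1 d.toProd.2

/-- The (open) region enclosed by the drawing of a cycle: the union of the bounded
connected components of the complement of its trace. -/
def cycInside (Γ : PolyDrawing G) {x : V} (c : G.Walk x x) : Set Pt :=
  {p | p ∉ Γ.cycleTrace c ∧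
    Bornology.IsBounded (connectedComponentIn (Γ.cycleTrace c)ᶜ p)}

/-- The region outside the drawing of a cycle. -/
def cycOutside (Γ : PolyDrawing G) {x : V} (c : G.Walk x x) : Set Pt :=
  {p | p ∉ Γ.cycleTrace c ∧
    ¬ Bornology.IsBounded (connectedComponentIn (Γ.cycleTrace c)ᶜ p)}

/-- The edge `(u,v)` is embedded outside the cycle `c`. -/
def EdgeOutside (Γ : PolyDrawing G) {x : V} (c : G.Walk x x) (u v : V) : Prop :=
  Γ.openTrace u v ⊆ Γ.cycOutside c

/-- The edge `(u,v)` is embedded inside the cycle `c`. -/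
def EdgeInside (Γ : PolyDrawing G) {x : V} (c : G.Walk x x) (u v : V) : Prop :=
  Γ.openTrace u v ⊆ Γ.cycInside c

/-- `c` is the external cycle `C_o(G)` of the plane graph described by the drawing:
its trace is the boundary of the outer face. -/
def IsExternalCycle (Γ : PolyDrawing G) {x : V} (c : G.Walk x x) : Prop :=
  c.IsCycle ∧ Γ.cycleTrace c = frontier (outerPart Γ.drawTrace)

/-- `e` is a leg of the cycle `c`: an edge not in `G(c)` with exactly one endpoint on `c`. -/
def IsLegEdge (Γ : PolyDrawing G) {x : V} (c : G.Walk x x) (e : Sym2 V) : Prop :=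
  ∃ u v : V, e = s(u, v) ∧ G.Adj u v ∧ u ∈ c.support ∧ v ∉ c.support ∧ Γ.EdgeOutside c u v

/-- `u` is a leg-vertex of the cycle `c`. -/
def IsLegVertex (Γ : PolyDrawing G) {x : V} (c : G.Walk x x) (u : V) : Prop :=
  ∃ w : V, G.Adj u w ∧ u ∈ c.support ∧ w ∉ c.support ∧ Γ.EdgeOutside c u w

/-- `c` is a `k`-legged cycle: it has exactly `k` legs and no edge embedded outside `c`
joins two of its vertices. -/
def IsKLegged (Γ : PolyDrawing G) {x : V} (c : G.Walk x x) (k : ℕ) : Prop :=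
  {e : Sym2 V | Γ.IsLegEdge c e}.ncard = k ∧
    ∀ u v : V, G.Adj u v → u ∈ c.support → v ∈ c.support → ¬ Γ.EdgeOutside c u v

/-- The edge `(u,v)` belongs to `G(c)` (the cycle `c` together with everything inside). -/
def EdgeInGC (Γ : PolyDrawing G) {x : V} (c : G.Walk x x) (u v : V) : Prop :=
  s(u, v) ∈ c.edges ∨ Γ.EdgeInside c u v

/-- The initial direction of a drawn walk. -/
def startDir (Γ : PolyDrawing G) {u v : V} (w : G.Walk u v) : Pt :=
  (Γ.walkPts w).tail.headI - Γ.pos u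

/-- The common start `u` of the two contour paths `pl, pr` is a convex (90 degree)
external corner of the drawing of `G(c)`: points slightly inside the wedge of the two
initial directions belong to the region enclosed by the cycle. -/
def PoleConvex (Γ : PolyDrawing G) {x : V} (c : G.Walk x x) {u v : V}
    (pl pr : G.Walk u v) : Prop :=
  ∃ δ : ℝ, 0 < δ ∧ ∀ t : ℝ, 0 < t → t < δ →
    Γ.pos u + t • (Γ.startDir pl + Γ.startDir pr) ∈ Γ.cycInside c

/-- `pl` and `pr` are the two contour paths from `u` to `v` of the drawing of `G(c)`
(for a 2-legged cycle `c` whose leg-vertices are `u` and `v`), with the poles at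
convex corners of the boundary. -/
def ContourPair (Γ : PolyDrawing G) {x : V} (c : G.Walk x x) {u v : V}
    (pl pr : G.Walk u v) : Prop :=
  pl.IsPath ∧ pr.IsPath ∧ (∀ e : Sym2 V, e ∈ pl.edges → e ∉ pr.edges) ∧
    (∀ e : Sym2 V, e ∈ c.edges ↔ (e ∈ pl.edges ∨ e ∈ pr.edges)) ∧
    Γ.PoleConvex c pl pr ∧ Γ.PoleConvex c pl.reverse pr.reverse

/-- The drawing of `G(c)` is X-shaped with poles `u` and `v`. -/
def IsXShaped (Γ : PolyDrawing G) {x : V} (c : G.Walk x x) (u v : V) : Prop :=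
  ∃ pl pr : G.Walk u v, Γ.ContourPair c pl pr ∧
    Γ.walkTurnNumber pl = 1 ∧ Γ.walkTurnNumber pr = 1

/-- The drawing of `G(c)` is D-shaped with poles `u` and `v`. -/
def IsDShaped (Γ : PolyDrawing G) {x : V} (c : G.Walk x x) (u v : V) : Prop :=
  ∃ pl pr : G.Walk u v, Γ.ContourPair c pl pr ∧
    Γ.walkTurnNumber pl = 0 ∧ Γ.walkTurnNumber pr = 2

/-- Two drawings define the same planar embedding (same set of faces and same external
face): some homeomorphism of the plane maps one onto the other, vertexwise and edgewise. -/
def SameEmbedding (Γ₀ Γ : PolyDrawing G) : Prop :=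
  ∃ h : Pt ≃ₜ Pt, (∀ v : V, h (Γ₀.pos v) = Γ.pos v) ∧
    ∀ u v : V, G.Adj u v → h '' Γ₀.edgeTrace u v = Γ.edgeTrace u v

end PolyDrawing

/-- Conditions (i), (ii), (iii) of Rahman-Nishizeki-Naznin for a biconnected plane
3-graph given by the drawing `Γ`. -/
def RNConditions (G : SimpleGraph V) (Γ : PolyDrawing G) : Prop :=
  (∀ (x : V) (c : G.Walk x x), Γ.IsExternalCycle c →
      4 ≤ {v : V | v ∈ c.support ∧ degOf G v = 2}.ncard) ∧
  (∀ (x : V) (c : G.Walk x x), c.IsCycle → Γ.IsKLegged c 2 →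
      2 ≤ {v : V | v ∈ c.support ∧ degOf G v = 2}.ncard) ∧
  (∀ (x : V) (c : G.Walk x x), c.IsCycle → Γ.IsKLegged c 3 →
      1 ≤ {v : V | v ∈ c.support ∧ degOf G v = 2}.ncard)

/-!
A vertex of degree three leaves in three different axis directions, since two edges leaving
it along the same ray would overlap. So it can neither maximise a diagonal functional
`±x ± y` over all corners (vertices and bends) of the drawing, as only two axis directions
decrease such a functional, nor be extreme in both coordinates. Hence each of the four diagonal
functionals is maximised at a bend; the bend has a horizontal and a vertical neighbour, which
determine the signs of the functional, so the four bends are distinct.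

If every edge had at most one bend, every corner would share its abscissa with a vertex and its
ordinate with a vertex, so the leftmost, rightmost, lowest and highest corners can be taken to be
vertices, pairwise distinct by the above. In `K₄` the edge joining the leftmost and rightmost
vertices crosses the whole bounding box horizontally, the edge joining the lowest and highest
vertices crosses it vertically, and the two meet away from any vertex.
-/

theorem mem_segsOf_of_infix {l : List Pt} {p q : Pt} (h : [p, q] <:+: l) :
    (p, q) ∈ segsOf l := by
  induction l with
  | nil => simp at h
  | cons c l ih =>
    rcases List.infix_cons_iff.mp h with ⟨t, ht⟩ | h
    · simp only [List.cons_append, List.nil_append, List.cons.injEq] at ht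
      obtain ⟨rfl, rfl⟩ := ht
      simp [segsOf]
    · cases l with
      | nil => simp at h
      | cons d l => simpa [segsOf] using Or.inr (ih h)

theorem mem_triplesOf_of_infix {l : List Pt} {a p b : Pt} (h : [a, p, b] <:+: l) :
    (a, p, b) ∈ triplesOf l := by
  induction l with
  | nil => simp at h
  | cons c l ih =>
    rcases List.infix_cons_iff.mp h with ⟨t, ht⟩ | h
    · simp only [List.cons_append, List.nil_append, List.cons.injEq] at ht
      obtain ⟨rfl, rfl⟩ := ht
      simp [triplesOf]
    · match l, h, ih with
      | [], h, _ => simp at h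
      | [_], h, _ => simpa using h.length_le
      | d :: e :: l, h, ih => simpa [triplesOf] using Or.inr (ih h)

theorem segment_subset_chainTrace {l : List Pt} {p q : Pt} (h : [p, q] <:+: l) :
    segment ℝ p q ⊆ chainTrace l :=
  fun _ hx => Set.mem_iUnion₂.mpr ⟨_, mem_segsOf_of_infix h, hx⟩

theorem exists_infix_of_mem {α : Type*} {l : List α} {x : α} (y z : α) (hx : x ∈ l) :
    ∃ a b, [a, x, b] <:+: y :: (l ++ [z]) := by
  obtain ⟨s, t, rfl⟩ := List.append_of_mem hx
  obtain ⟨s', a, hs⟩ : ∃ s' a, y :: s = s' ++ [a] :=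
    ⟨_, _, (List.dropLast_append_getLast (List.cons_ne_nil y s)).symm⟩
  obtain ⟨b, t', ht⟩ : ∃ b t', t ++ [z] = b :: t' := by
    cases t <;> simp
  refine ⟨a, b, s', t', ?_⟩
  rw [show y :: (s ++ x :: t ++ [z]) = (y :: s) ++ x :: (t ++ [z]) by simp, hs, ht]
  simp

theorem mk_mem_segment_left {x₁ x₂ x : ℝ} (y : ℝ) (hx : x ∈ Set.uIcc x₁ x₂) :
    ((x, y) : Pt) ∈ segment ℝ (x₁, y) (x₂, y) := by
  rw [← Prod.image_mk_segment_left, segment_eq_uIcc]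
  exact ⟨x, hx, rfl⟩

theorem mk_mem_segment_right (x : ℝ) {y₁ y₂ y : ℝ} (hy : y ∈ Set.uIcc y₁ y₂) :
    ((x, y) : Pt) ∈ segment ℝ (x, y₁) (x, y₂) := by
  rw [← Prod.image_mk_segment_right, segment_eq_uIcc]
  exact ⟨y, hy, rfl⟩

theorem rel_of_isChain_of_infix {α : Type*} {R : α → α → Prop} {l : List α} {a b : α}
    (hl : l.IsChain R) (h : [a, b] <:+: l) : R a b := by
  simpa using hl.infix h

theorem IsExtrOn.exists_isMaxOn_mul {α : Type*} {f : α → ℝ} {s : Set α} {a : α}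
    (h : IsExtrOn f s a) : ∃ ε : ℝ, ε ≠ 0 ∧ IsMaxOn (fun x => ε * f x) s a := by
  rcases h with h | h
  · exact ⟨-1, by norm_num, isMaxOn_iff.mpr fun x hx => by linarith [isMinOn_iff.mp h x hx]⟩
  · exact ⟨1, one_ne_zero, isMaxOn_iff.mpr fun x hx => by linarith [isMaxOn_iff.mp h x hx]⟩

namespace PolyDrawing

variable {G : SimpleGraph V} (Γ : PolyDrawing G)

def corners : Set Pt := {p | ∃ u v, G.Adj u v ∧ p ∈ Γ.edgePts u v}

theorem finite_corners [Finite V] : Γ.corners.Finite := by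
  refine (Set.finite_iUnion fun u : V => Set.finite_iUnion fun v : V =>
    List.finite_toSet (Γ.edgePts u v)).subset ?_
  rintro p ⟨u, v, -, hp⟩
  exact Set.mem_iUnion₂.mpr ⟨u, v, hp⟩

theorem pos_mem_corners {u v : V} (h : G.Adj u v) : Γ.pos u ∈ Γ.corners :=
  ⟨u, v, h, List.mem_cons_self ..⟩

theorem pos_mem_corners_of_degOf_ne_zero {w : V} (hw : degOf G w ≠ 0) :
    Γ.pos w ∈ Γ.corners :=
  let ⟨_, hx⟩ := Set.nonempty_of_ncard_ne_zero hw
  Γ.pos_mem_corners hx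

def nextPt (u v : V) : Pt := (Γ.bends u v).headD (Γ.pos v)

theorem pos_nextPt_infix (u v : V) : [Γ.pos u, Γ.nextPt u v] <:+: Γ.edgePts u v := by
  refine List.IsPrefix.isInfix ?_
  unfold edgePts nextPt
  cases Γ.bends u v <;> simp

theorem nextPt_mem_corners {u v : V} (h : G.Adj u v) : Γ.nextPt u v ∈ Γ.corners :=
  ⟨u, v, h, (Γ.pos_nextPt_infix u v).subset (by simp)⟩

theorem pos_ne_nextPt {u v : V} (h : G.Adj u v) : Γ.pos u ≠ Γ.nextPt u v :=
  rel_of_isChain_of_infix (Γ.edge_nondeg u v h) (Γ.pos_nextPt_infix u v)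

theorem segment_nextPt_subset_edgeTrace (u v : V) :
    segment ℝ (Γ.pos u) (Γ.nextPt u v) ⊆ Γ.edgeTrace u v :=
  segment_subset_chainTrace (Γ.pos_nextPt_infix u v)

theorem edgeTrace_inter_edgeTrace_subset {w x y : V} (hx : G.Adj w x) (hy : G.Adj w y)
    (hxy : x ≠ y) : Γ.edgeTrace w x ∩ Γ.edgeTrace w y ⊆ {Γ.pos w} := by
  intro p hp
  obtain ⟨z, ⟨hzx, hzy⟩, rfl⟩ :=
    Γ.edges_disjoint w x w y hx hy (by rwa [Ne, Sym2.congr_right]) hp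
  simp only [Set.mem_insert_iff, Set.mem_singleton_iff] at hzx hzy ⊢
  grind

theorem not_wbtw_nextPt {w x y : V} (hx : G.Adj w x) (hy : G.Adj w y) (hxy : x ≠ y) :
    ¬ Wbtw ℝ (Γ.pos w) (Γ.nextPt w x) (Γ.nextPt w y) := fun h =>
  Γ.pos_ne_nextPt hx <| Eq.symm <| Γ.edgeTrace_inter_edgeTrace_subset hx hy hxy
    ⟨Γ.segment_nextPt_subset_edgeTrace w x (right_mem_segment ..),
      Γ.segment_nextPt_subset_edgeTrace w y (mem_segment_iff_wbtw.mpr h)⟩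

theorem eq_of_sameRay_nextPt {w x y : V} (hx : G.Adj w x) (hy : G.Adj w y)
    (h : SameRay ℝ (Γ.nextPt w x - Γ.pos w) (Γ.nextPt w y - Γ.pos w)) : x = y := by
  by_contra hxy
  rw [← vsub_eq_sub, ← vsub_eq_sub] at h
  rcases wbtw_total_of_sameRay_vsub_left h with h | h
  · exact Γ.not_wbtw_nextPt hx hy hxy h
  · exact Γ.not_wbtw_nextPt hy hx (Ne.symm hxy) h

theorem degOf_le_two_of_sameRay {w : V} {e₁ e₂ : Pt} (he₁ : e₁ ≠ 0) (he₂ : e₂ ≠ 0)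
    (h : ∀ x, G.Adj w x → SameRay ℝ (Γ.nextPt w x - Γ.pos w) e₁ ∨
      SameRay ℝ (Γ.nextPt w x - Γ.pos w) e₂) :
    degOf G w ≤ 2 := by
  classical
  have hinj : Set.InjOn (fun x => decide (SameRay ℝ (Γ.nextPt w x - Γ.pos w) e₁))
      (G.neighborSet w) := by
    intro x hx y hy hxy
    simp only [decide_eq_decide] at hxy
    apply Γ.eq_of_sameRay_nextPt hx hy
    by_cases h₁ : SameRay ℝ (Γ.nextPt w x - Γ.pos w) e₁
    · exact h₁.trans (hxy.mp h₁).symm fun h => absurd h he₁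
    · exact ((h x hx).resolve_left h₁).trans ((h y hy).resolve_left (hxy.not.mp h₁)).symm
        fun h => absurd h he₂
  calc degOf G w ≤ (Set.univ : Set Bool).ncard :=
        Set.ncard_le_ncard_of_injOn _ (fun _ _ => Set.mem_univ _) hinj
    _ = 2 := by simp

open Classical in
noncomputable def bendFinset : Sym2 V → Finset Pt :=
  Sym2.lift ⟨fun u v => (Γ.bends u v).toFinset, fun u v => by
    simp only [Γ.bends_symm u v, List.toFinset_reverse]⟩

theorem card_le_totalBends [Fintype V] {S : Finset Pt}
    (hS : ∀ p ∈ S, ∃ u v, G.Adj u v ∧ p ∈ Γ.bends u v) : S.card ≤ Γ.totalBends := by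
  classical
  calc S.card ≤ ((Set.toFinite G.edgeSet).toFinset.biUnion Γ.bendFinset).card := by
        refine Finset.card_le_card fun p hp => ?_
        obtain ⟨u, v, huv, hp⟩ := hS p hp
        exact Finset.mem_biUnion.mpr
          ⟨s(u, v), by simpa using huv, by simpa [bendFinset] using hp⟩
    _ ≤ ∑ e ∈ (Set.toFinite G.edgeSet).toFinset, (Γ.bendFinset e).card :=
        Finset.card_biUnion_le
    _ ≤ Γ.totalBends := Finset.sum_le_sum fun e _ => e.ind fun u v => List.toFinset_card_le _

end PolyDrawing

namespace OrthoDrawing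

variable {G : SimpleGraph V} (Γ : OrthoDrawing G)

theorem axisSeg_of_infix {u v : V} (huv : G.Adj u v) {p q : Pt}
    (h : [p, q] <:+: Γ.edgePts u v) : AxisSeg p q :=
  rel_of_isChain_of_infix (Γ.edge_axis u v huv) h

theorem perpCorner_of_infix {u v : V} (huv : G.Adj u v) {a p b : Pt}
    (h : [a, p, b] <:+: Γ.edgePts u v) : PerpCorner a p b :=
  Γ.edge_alt u v huv _ (mem_triplesOf_of_infix h)

theorem exists_horizontal_and_vertical_of_mem_bends {u v : V} (huv : G.Adj u v) {p : Pt}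
    (hp : p ∈ Γ.bends u v) :
    (∃ q ∈ Γ.corners, q.2 = p.2 ∧ q.1 ≠ p.1) ∧
      (∃ q ∈ Γ.corners, q.1 = p.1 ∧ q.2 ≠ p.2) := by
  obtain ⟨a, b, h⟩ := exists_infix_of_mem (Γ.pos u) (Γ.pos v) hp
  have ha : a ∈ Γ.corners := ⟨u, v, huv, h.subset (by simp)⟩
  have hb : b ∈ Γ.corners := ⟨u, v, huv, h.subset (by simp)⟩
  have hap : a ≠ p := (Γ.axisSeg_of_infix huv (List.IsInfix.trans ⟨[], [b], rfl⟩ h)).1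
  have hpb : p ≠ b := (Γ.axisSeg_of_infix huv (List.IsInfix.trans ⟨[a], [], rfl⟩ h)).1
  rcases Γ.perpCorner_of_infix huv h with ⟨h₁, h₂⟩ | ⟨h₁, h₂⟩
  · exact ⟨⟨b, hb, h₂.symm, fun h => hpb (Prod.ext h.symm h₂)⟩,
      ⟨a, ha, h₁, fun h => hap (Prod.ext h₁ h)⟩⟩
  · exact ⟨⟨a, ha, h₁, fun h => hap (Prod.ext h h₁)⟩,
      ⟨b, hb, h₂.symm, fun h => hpb (Prod.ext h₂ h.symm)⟩⟩

theorem degOf_le_two_of_isMaxOn {d : Pt} (hd₁ : d.1 ≠ 0) (hd₂ : d.2 ≠ 0) {w : V}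
    (h : IsMaxOn (fun q : Pt => d.1 * q.1 + d.2 * q.2) Γ.corners (Γ.pos w)) :
    degOf G w ≤ 2 := by
  refine Γ.degOf_le_two_of_sameRay (e₁ := (-d.1) • (1, 0)) (e₂ := (-d.2) • (0, 1))
    (smul_ne_zero (neg_ne_zero.mpr hd₁) (by simp))
    (smul_ne_zero (neg_ne_zero.mpr hd₂) (by simp)) fun x hx => ?_
  have hle := isMaxOn_iff.mp h _ (Γ.nextPt_mem_corners hx)
  rcases (Γ.axisSeg_of_infix hx (Γ.pos_nextPt_infix w x)).2 with h₁ | h₂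
  · right
    rw [show Γ.nextPt w x - Γ.pos w = ((Γ.nextPt w x).2 - (Γ.pos w).2) • ((0, 1) : Pt) from
      Prod.ext (by simp [h₁]) (by simp)]
    exact sameRay_smul_smul_of_mul_nonneg (by rw [h₁] at hle; linarith)
  · left
    rw [show Γ.nextPt w x - Γ.pos w = ((Γ.nextPt w x).1 - (Γ.pos w).1) • ((1, 0) : Pt) from
      Prod.ext (by simp) (by simp [h₂])]
    exact sameRay_smul_smul_of_mul_nonneg (by rw [h₂] at hle; linarith)

theorem exists_mem_bends_isMaxOn [Finite V] [Nonempty V] (hdeg : ∀ v, 3 ≤ degOf G v)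
    {d : Pt} (hd₁ : d.1 ≠ 0) (hd₂ : d.2 ≠ 0) :
    ∃ p, (∃ u v, G.Adj u v ∧ p ∈ Γ.bends u v) ∧
      IsMaxOn (fun q : Pt => d.1 * q.1 + d.2 * q.2) Γ.corners p := by
  obtain ⟨w₀⟩ := ‹Nonempty V›
  obtain ⟨p, ⟨u, v, huv, hp⟩, hmax⟩ := Set.exists_max_image _
    (fun q : Pt => d.1 * q.1 + d.2 * q.2) Γ.finite_corners
    ⟨_, Γ.pos_mem_corners_of_degOf_ne_zero (by have := hdeg w₀; omega : degOf G w₀ ≠ 0)⟩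
  have hvertex : ∀ w, p ≠ Γ.pos w := by
    rintro w rfl
    have := Γ.degOf_le_two_of_isMaxOn hd₁ hd₂ (isMaxOn_iff.mpr hmax)
    have := hdeg w
    omega
  simp only [PolyDrawing.edgePts, List.mem_cons, List.mem_append,
    List.not_mem_nil, or_false] at hp
  refine ⟨p, ⟨u, v, huv, ?_⟩, isMaxOn_iff.mpr hmax⟩
  rcases hp with hp | hp | hp
  exacts [absurd hp (hvertex u), hp, absurd hp (hvertex v)]

theorem mul_nonneg_of_isMaxOn_of_mem_bends {u v : V} (huv : G.Adj u v) {p : Pt}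
    (hp : p ∈ Γ.bends u v) {d d' : Pt}
    (h : IsMaxOn (fun q : Pt => d.1 * q.1 + d.2 * q.2) Γ.corners p)
    (h' : IsMaxOn (fun q : Pt => d'.1 * q.1 + d'.2 * q.2) Γ.corners p) :
    0 ≤ d.1 * d'.1 ∧ 0 ≤ d.2 * d'.2 := by
  obtain ⟨⟨a, ha, ha₂, ha₁⟩, ⟨b, hb, hb₁, hb₂⟩⟩ :=
    Γ.exists_horizontal_and_vertical_of_mem_bends huv hp
  have key : ∀ {s s' t : ℝ}, t ≠ 0 → s * t ≤ 0 → s' * t ≤ 0 → 0 ≤ s * s' :=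
    fun ht h h' => by
      nlinarith [sq_pos_of_ne_zero ht, mul_nonneg_of_nonpos_of_nonpos h h']
  have hfa := isMaxOn_iff.mp h a ha
  have hfa' := isMaxOn_iff.mp h' a ha
  have hfb := isMaxOn_iff.mp h b hb
  have hfb' := isMaxOn_iff.mp h' b hb
  simp only [ha₂, hb₁] at hfa hfa' hfb hfb'
  exact ⟨key (sub_ne_zero.mpr ha₁) (by linarith) (by linarith),
    key (sub_ne_zero.mpr hb₂) (by linarith) (by linarith)⟩

theorem four_le_totalBends [Fintype V] [Nonempty V] (hdeg : ∀ v, 3 ≤ degOf G v) :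
    4 ≤ Γ.totalBends := by
  classical
  let D : Finset Pt := {(1, 1), (1, -1), (-1, 1), (-1, -1)}
  have hD : ∀ d ∈ D, d.1 ≠ 0 ∧ d.2 ≠ 0 := by simp [D]
  choose! m hm using fun d (hd : d ∈ D) =>
    Γ.exists_mem_bends_isMaxOn hdeg (hD d hd).1 (hD d hd).2
  have hinj : Set.InjOn m D := by
    intro d hd d' hd' hdd'
    obtain ⟨u, v, huv, hp⟩ := (hm d hd).1
    have := Γ.mul_nonneg_of_isMaxOn_of_mem_bends huv hp (hm d hd).2 (hdd' ▸ (hm d' hd').2)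
    simp only [D, Finset.coe_insert, Finset.coe_singleton, Set.mem_insert_iff,
      Set.mem_singleton_iff] at hd hd'
    rcases hd with rfl | rfl | rfl | rfl <;> rcases hd' with rfl | rfl | rfl | rfl <;>
      first | rfl | norm_num at this
  calc 4 = D.card := by
        rw [Finset.card_insert_of_notMem, Finset.card_insert_of_notMem, Finset.card_pair] <;>
          norm_num
    _ = (D.image m).card := (Finset.card_image_of_injOn hinj).symm
    _ ≤ Γ.totalBends := Γ.card_le_totalBends fun p hp => by
      obtain ⟨d, hd, rfl⟩ := Finset.mem_image.mp hp
      exact (hm d hd).1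

theorem degOf_le_two_of_isExtrOn {w : V} (hx : IsExtrOn Prod.fst Γ.corners (Γ.pos w))
    (hy : IsExtrOn Prod.snd Γ.corners (Γ.pos w)) : degOf G w ≤ 2 := by
  obtain ⟨ε₁, hε₁, h₁⟩ := hx.exists_isMaxOn_mul
  obtain ⟨ε₂, hε₂, h₂⟩ := hy.exists_isMaxOn_mul
  exact Γ.degOf_le_two_of_isMaxOn (d := (ε₁, ε₂)) hε₁ hε₂ (h₁.add h₂)

theorem exists_corner_of_length_bends_le_one {u v : V} (huv : G.Adj u v)
    (hb : (Γ.bends u v).length ≤ 1) :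
    ∃ m : Pt, (m = ((Γ.pos u).1, (Γ.pos v).2) ∨ m = ((Γ.pos v).1, (Γ.pos u).2)) ∧
      (∀ p ∈ Γ.edgePts u v, p = Γ.pos u ∨ p = m ∨ p = Γ.pos v) ∧
      segment ℝ (Γ.pos u) m ⊆ Γ.edgeTrace u v ∧
      segment ℝ m (Γ.pos v) ⊆ Γ.edgeTrace u v := by
  rcases h : Γ.bends u v with _ | ⟨m, _ | ⟨_, _⟩⟩
  · have hseg : segment ℝ (Γ.pos u) (Γ.pos v) ⊆ Γ.edgeTrace u v :=
      segment_subset_chainTrace (by simp [PolyDrawing.edgePts, h])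
    have hpv : segment ℝ (Γ.pos v) (Γ.pos v) ⊆ Γ.edgeTrace u v := by
      rw [segment_same, Set.singleton_subset_iff]
      exact hseg (right_mem_segment ..)
    refine ⟨Γ.pos v, ?_, by simp [PolyDrawing.edgePts, h], hseg, hpv⟩
    rcases (Γ.axisSeg_of_infix huv (by simp [PolyDrawing.edgePts, h] :
      [Γ.pos u, Γ.pos v] <:+: Γ.edgePts u v)).2 with h₁ | h₂
    · exact Or.inl (Prod.ext h₁.symm rfl)
    · exact Or.inr (Prod.ext rfl h₂.symm)
  · have hinfix : [Γ.pos u, m, Γ.pos v] <:+: Γ.edgePts u v := by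
      simp [PolyDrawing.edgePts, h]
    refine ⟨m, ?_, by simp [PolyDrawing.edgePts, h],
      segment_subset_chainTrace (List.IsInfix.trans ⟨[], [Γ.pos v], rfl⟩ hinfix),
      segment_subset_chainTrace (List.IsInfix.trans ⟨[Γ.pos u], [], rfl⟩ hinfix)⟩
    rcases Γ.perpCorner_of_infix huv hinfix with ⟨h₁, h₂⟩ | ⟨h₁, h₂⟩
    · exact Or.inl (Prod.ext h₁.symm h₂)
    · exact Or.inr (Prod.ext h₂ h₁.symm)
  · simp [h] at hb

theorem exists_horizontal_subset_edgeTrace {u v : V} (huv : G.Adj u v)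
    (hb : (Γ.bends u v).length ≤ 1) :
    ∃ t, (t = (Γ.pos u).2 ∨ t = (Γ.pos v).2) ∧
      ∀ x ∈ Set.uIcc (Γ.pos u).1 (Γ.pos v).1, ((x, t) : Pt) ∈ Γ.edgeTrace u v := by
  obtain ⟨m, hm, -, hum, hmv⟩ := Γ.exists_corner_of_length_bends_le_one huv hb
  rcases hm with rfl | rfl
  · exact ⟨(Γ.pos v).2, Or.inr rfl, fun x hx => hmv (mk_mem_segment_left _ hx)⟩
  · exact ⟨(Γ.pos u).2, Or.inl rfl, fun x hx => hum (mk_mem_segment_left _ hx)⟩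

theorem exists_vertical_subset_edgeTrace {u v : V} (huv : G.Adj u v)
    (hb : (Γ.bends u v).length ≤ 1) :
    ∃ s, (s = (Γ.pos u).1 ∨ s = (Γ.pos v).1) ∧
      ∀ y ∈ Set.uIcc (Γ.pos u).2 (Γ.pos v).2, ((s, y) : Pt) ∈ Γ.edgeTrace u v := by
  obtain ⟨m, hm, -, hum, hmv⟩ := Γ.exists_corner_of_length_bends_le_one huv hb
  rcases hm with rfl | rfl
  · exact ⟨(Γ.pos u).1, Or.inl rfl, fun y hy => hum (mk_mem_segment_right _ hy)⟩
  · exact ⟨(Γ.pos v).1, Or.inr rfl, fun y hy => hmv (mk_mem_segment_right _ hy)⟩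

theorem exists_pos_fst_eq_and_exists_pos_snd_eq
    (hbends : ∀ u v, G.Adj u v → (Γ.bends u v).length ≤ 1) {p : Pt} (hp : p ∈ Γ.corners) :
    (∃ w, (Γ.pos w).1 = p.1) ∧ ∃ w, (Γ.pos w).2 = p.2 := by
  obtain ⟨u, v, huv, hp⟩ := hp
  obtain ⟨m, hm, hpts, -⟩ := Γ.exists_corner_of_length_bends_le_one huv (hbends u v huv)
  rcases hpts p hp with rfl | rfl | rfl
  · exact ⟨⟨u, rfl⟩, ⟨u, rfl⟩⟩
  · rcases hm with rfl | rfl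
    · exact ⟨⟨u, rfl⟩, ⟨v, rfl⟩⟩
    · exact ⟨⟨v, rfl⟩, ⟨u, rfl⟩⟩
  · exact ⟨⟨v, rfl⟩, ⟨v, rfl⟩⟩

theorem exists_extreme_vertices [Finite V]
    (hbends : ∀ u v, G.Adj u v → (Γ.bends u v).length ≤ 1) (hne : Γ.corners.Nonempty) :
    ∃ a b c d : V, IsMaxOn Prod.fst Γ.corners (Γ.pos a) ∧
      IsMinOn Prod.fst Γ.corners (Γ.pos b) ∧ IsMaxOn Prod.snd Γ.corners (Γ.pos c) ∧
      IsMinOn Prod.snd Γ.corners (Γ.pos d) := by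
  obtain ⟨pa, hpa, ha⟩ := Set.exists_max_image _ Prod.fst Γ.finite_corners hne
  obtain ⟨pb, hpb, hb⟩ := Set.exists_min_image _ Prod.fst Γ.finite_corners hne
  obtain ⟨pc, hpc, hc⟩ := Set.exists_max_image _ Prod.snd Γ.finite_corners hne
  obtain ⟨pd, hpd, hd⟩ := Set.exists_min_image _ Prod.snd Γ.finite_corners hne
  obtain ⟨⟨a, ha'⟩, -⟩ := Γ.exists_pos_fst_eq_and_exists_pos_snd_eq hbends hpa
  obtain ⟨⟨b, hb'⟩, -⟩ := Γ.exists_pos_fst_eq_and_exists_pos_snd_eq hbends hpb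
  obtain ⟨-, ⟨c, hc'⟩⟩ := Γ.exists_pos_fst_eq_and_exists_pos_snd_eq hbends hpc
  obtain ⟨-, ⟨d, hd'⟩⟩ := Γ.exists_pos_fst_eq_and_exists_pos_snd_eq hbends hpd
  exact ⟨a, b, c, d, isMaxOn_iff.mpr fun q hq => (ha q hq).trans_eq ha'.symm,
    isMinOn_iff.mpr fun q hq => hb'.trans_le (hb q hq),
    isMaxOn_iff.mpr fun q hq => (hc q hq).trans_eq hc'.symm,
    isMinOn_iff.mpr fun q hq => hd'.trans_le (hd q hq)⟩

theorem exists_common_endpoint_of_isExtrOn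
    (hbends : ∀ u v, G.Adj u v → (Γ.bends u v).length ≤ 1) {a b c d : V}
    (hab : G.Adj a b) (hcd : G.Adj c d)
    (ha : IsMaxOn Prod.fst Γ.corners (Γ.pos a)) (hb : IsMinOn Prod.fst Γ.corners (Γ.pos b))
    (hc : IsMaxOn Prod.snd Γ.corners (Γ.pos c)) (hd : IsMinOn Prod.snd Γ.corners (Γ.pos d)) :
    (({a, b} : Set V) ∩ {c, d}).Nonempty := by
  by_cases hne : s(a, b) = s(c, d)
  · rcases Sym2.eq_iff.mp hne with ⟨rfl, -⟩ | ⟨rfl, -⟩ <;> exact ⟨a, by simp⟩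
  obtain ⟨t, ht, hab'⟩ := Γ.exists_horizontal_subset_edgeTrace hab (hbends a b hab)
  obtain ⟨s, hs, hcd'⟩ := Γ.exists_vertical_subset_edgeTrace hcd (hbends c d hcd)
  have hs' : s ∈ Set.uIcc (Γ.pos a).1 (Γ.pos b).1 := by
    rcases hs with rfl | rfl
    · exact Set.mem_uIcc.mpr (.inr ⟨hb (Γ.pos_mem_corners hcd), ha (Γ.pos_mem_corners hcd)⟩)
    · exact Set.mem_uIcc.mpr
        (.inr ⟨hb (Γ.pos_mem_corners hcd.symm), ha (Γ.pos_mem_corners hcd.symm)⟩)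
  have ht' : t ∈ Set.uIcc (Γ.pos c).2 (Γ.pos d).2 := by
    rcases ht with rfl | rfl
    · exact Set.mem_uIcc.mpr (.inr ⟨hd (Γ.pos_mem_corners hab), hc (Γ.pos_mem_corners hab)⟩)
    · exact Set.mem_uIcc.mpr
        (.inr ⟨hd (Γ.pos_mem_corners hab.symm), hc (Γ.pos_mem_corners hab.symm)⟩)
  obtain ⟨z, hz, -⟩ := Γ.edges_disjoint a b c d hab hcd hne ⟨hab' s hs', hcd' t ht'⟩
  exact ⟨z, hz⟩

theorem exists_ne_not_adj_of_length_bends_le_one [Finite V] [Nonempty V]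
    (hdeg : ∀ v, 3 ≤ degOf G v) (hbends : ∀ u v, G.Adj u v → (Γ.bends u v).length ≤ 1) :
    ∃ u v, u ≠ v ∧ ¬ G.Adj u v := by
  by_contra! hG
  have hpos : ∀ w, Γ.pos w ∈ Γ.corners := fun w =>
    Γ.pos_mem_corners_of_degOf_ne_zero (by have := hdeg w; omega)
  have hbox : ∀ w, IsExtrOn Prod.fst Γ.corners (Γ.pos w) →
      ¬ IsExtrOn Prod.snd Γ.corners (Γ.pos w) := fun w hx hy => by
    have := Γ.degOf_le_two_of_isExtrOn hx hy
    have := hdeg w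
    omega
  obtain ⟨a, b, c, d, ha, hb, hc, hd⟩ :=
    Γ.exists_extreme_vertices hbends ⟨_, hpos (Classical.arbitrary V)⟩
  have hac : a ≠ c := by rintro rfl; exact hbox a (.inr ha) (.inr hc)
  have had : a ≠ d := by rintro rfl; exact hbox a (.inr ha) (.inl hd)
  have hbc : b ≠ c := by rintro rfl; exact hbox b (.inl hb) (.inr hc)
  have hbd : b ≠ d := by rintro rfl; exact hbox b (.inl hb) (.inl hd)
  have hab : a ≠ b := by
    -- then all corners lie on one vertical line, so `c` is extreme in both coordinates
    rintro rfl
    exact hbox c (.inr (isMaxOn_iff.mpr fun q hq => (ha hq).trans (hb (hpos c)))) (.inr hc)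
  have hcd : c ≠ d := by
    rintro rfl
    exact hbox a (.inr ha) (.inr (isMaxOn_iff.mpr fun q hq => (hc hq).trans (hd (hpos a))))
  obtain ⟨z, hz₁, hz₂⟩ :=
    Γ.exists_common_endpoint_of_isExtrOn hbends (hG a b hab) (hG c d hcd) ha hb hc hd
  simp only [Set.mem_insert_iff, Set.mem_singleton_iff] at hz₁ hz₂
  rcases hz₁ with rfl | rfl <;> rcases hz₂ with rfl | rfl <;> contradiction

end OrthoDrawing

/-- Every planar orthogonal drawing of `K₄` has at least four bends in
total and contains an edge with at least two bends. -/
theorem K4_ortho_drawing_lower_bounds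
    (Γ : OrthoDrawing (⊤ : SimpleGraph (Fin 4))) :
    4 ≤ Γ.toPolyDrawing.totalBends ∧
    ∃ u v : Fin 4, (⊤ : SimpleGraph (Fin 4)).Adj u v ∧ 2 ≤ (Γ.bends u v).length := by
  have hdeg : ∀ v : Fin 4, 3 ≤ degOf ⊤ v := fun v => by
    rw [degOf, neighborSet_top, Set.ncard_eq_toFinset_card']
    simp [Finset.card_compl]
  refine ⟨Γ.four_le_totalBends hdeg, ?_⟩
  by_contra! hshort
  obtain ⟨u, v, huv, hnadj⟩ := Γ.exists_ne_not_adj_of_length_bends_le_one hdeg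
    fun u v huv => Nat.le_of_lt_succ (hshort u v huv)
  exact hnadj huv
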